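/- Let T be a contraction on a Banach space. If some subsequence T^{n_k} converges to the identity I in the weak operator topology, then the weak limit semigroup of T equals the weak operator closure of {T^n : n ≥ 0}. -/

import Mathlib

open Filter

/-- `S` belongs to the weak limit semigroup of `T` (Banach space version, with weak
operator convergence tested against bounded functionals). -/
def IsWeakLimitOfPowers {X : Type*} [NormedAddCommGroup X] [NormedSpace ℂ X]
    (T S : X →L[ℂ] X) : Prop :=
  ∃ n : ℕ → ℕ, StrictMono n ∧
    ∀ (x : X) (φ : X →L[ℂ] ℂ),
      Tendsto (fun k => φ ((T ^ n k) x)) atTop (nhds (φ (S x)))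

/-- `S` belongs to the closure of the set `A` of operators in the weak operator
topology. -/
def MemWOTClosure {X : Type*} [NormedAddCommGroup X] [NormedSpace ℂ X]
    (A : Set (X →L[ℂ] X)) (S : X →L[ℂ] X) : Prop :=
  ∀ ε > (0 : ℝ), ∀ (r : ℕ) (x : Fin r → X) (φ : Fin r → (X →L[ℂ] ℂ)),
    ∃ U ∈ A, ∀ i : Fin r, ‖φ i (U (x i)) - φ i (S (x i))‖ < ε

/-!
Weak operator limits of powers of `T` always lie in the weak operator closure of `{T ^ n}`.
Conversely, if `T ^ (n k) → I` weakly then also `T ^ (m + n k) → T ^ m` weakly, so any operator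
`S` in the closure is approximated, on any finite set of test pairs `(x, φ)`, by powers `T ^ m`
with `m` arbitrarily large. A diagonal argument over countable dense subsets of `X` and of its
dual (`X` is separable because its dual is) then gives a single increasing sequence `g` with
`T ^ (g k) → S` on those test pairs, and since the powers of a contraction are uniformly
bounded this convergence extends to all `x` and `φ`.
-/

open Topology TopologicalSpace NNReal

section Separability

variable {𝕜 E : Type*} [RCLike 𝕜] [NormedAddCommGroup E] [NormedSpace 𝕜 E]

theorem Submodule.exists_dual_eq_zero_ne_zero_of_notMem_closure (M : Submodule 𝕜 E) {z : E}
    (hz : z ∉ closure (M : Set E)) :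
    ∃ f : StrongDual 𝕜 E, (∀ w ∈ M, f w = 0) ∧ f z ≠ 0 := by
  have hz' : ‖M.mkQL z‖ ≠ 0 :=
    mt (QuotientAddGroup.norm_mk_eq_zero_iff_mem_closure (S := M.toAddSubgroup)).1 hz
  obtain ⟨g, -, hg⟩ := exists_dual_vector 𝕜 _ hz'
  refine ⟨g.comp M.mkQL, fun w hw => ?_, ?_⟩
  · simp [(Submodule.Quotient.mk_eq_zero M).2 hw]
  · simp only [ContinuousLinearMap.comp_apply, hg]
    exact_mod_cast hz'

theorem ContinuousLinearMap.exists_norm_le_one_half_opNorm_le_norm_apply (f : StrongDual 𝕜 E) :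
    ∃ y : E, ‖y‖ ≤ 1 ∧ ‖f‖ / 2 ≤ ‖f y‖ := by
  rcases eq_or_ne f 0 with rfl | hf
  · exact ⟨0, by simp⟩
  obtain ⟨y, hy, hfy⟩ := f.exists_lt_apply_of_lt_opNorm (half_lt_self (norm_pos_iff.2 hf))
  exact ⟨y, hy.le, hfy.le⟩

variable (𝕜 E) in
theorem separableSpace_of_separableSpace_strongDual [SeparableSpace (StrongDual 𝕜 E)] :
    SeparableSpace E := by
  have : Nonempty (StrongDual 𝕜 E) := ⟨0⟩
  set ψ := denseSeq (StrongDual 𝕜 E)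
  choose y hy_norm hψy using fun n => (ψ n).exists_norm_le_one_half_opNorm_le_norm_apply
  suffices hdense : Dense (Submodule.span 𝕜 (Set.range y) : Set E) by
    rw [← isSeparable_univ_iff, ← hdense.closure_eq]
    exact (Set.countable_range y).isSeparable.span.closure
  by_contra hnd
  obtain ⟨z, hz⟩ := (Set.ne_univ_iff_exists_notMem _).1 (mt dense_iff_closure_eq.2 hnd)
  obtain ⟨f, hf_span, hfz⟩ := Submodule.exists_dual_eq_zero_ne_zero_of_notMem_closure _ hz
  have hf : 0 < ‖f‖ := norm_pos_iff.2 fun h => hfz (by simp [h])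
  obtain ⟨n, hn⟩ := (denseRange_denseSeq _).exists_dist_lt f (by positivity : 0 < ‖f‖ / 4)
  rw [dist_eq_norm] at hn
  have hψy_le : ‖ψ n (y n)‖ ≤ ‖f‖ / 4 :=
    calc ‖ψ n (y n)‖ = ‖(f - ψ n) (y n)‖ := by
          simp [hf_span _ (Submodule.subset_span ⟨n, rfl⟩)]
      _ ≤ ‖f - ψ n‖ * ‖y n‖ := (f - ψ n).le_opNorm _
      _ ≤ ‖f‖ / 4 := (mul_le_of_le_one_right (norm_nonneg _) (hy_norm n)).trans hn.le
  linarith [norm_sub_norm_le f (ψ n), hψy n]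

end Separability

theorem isClosed_setOf_tendsto_of_lipschitzWith {ι α β : Type*} [PseudoMetricSpace α]
    [PseudoMetricSpace β] {l : Filter ι} {F : ι → α → β} {K : ℝ≥0}
    (hF : ∀ i, LipschitzWith K (F i)) {f : α → β} (hf : Continuous f) :
    IsClosed {x | Tendsto (F · x) l (𝓝 (f x))} :=
  (LipschitzWith.uniformEquicontinuous F K hF).equicontinuous.isClosed_setOfPred_tendsto hf

section NormedSpace

variable {𝕜 E F : Type*} [NontriviallyNormedField 𝕜] [NormedAddCommGroup E] [NormedSpace 𝕜 E]
  [NormedAddCommGroup F] [NormedSpace 𝕜 F]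

theorem tendsto_dual_apply_of_dense {ι : Type*} {l : Filter ι} {U : ι → E →L[𝕜] F} {C : ℝ≥0}
    (hU : ∀ i, ‖U i‖₊ ≤ C) (S : E →L[𝕜] F) {D : Set E} (hD : Dense D)
    {Ψ : Set (StrongDual 𝕜 F)} (hΨ : Dense Ψ)
    (h : ∀ x ∈ D, ∀ φ ∈ Ψ, Tendsto (fun i => φ (U i x)) l (𝓝 (φ (S x))))
    (x : E) (φ : StrongDual 𝕜 F) : Tendsto (fun i => φ (U i x)) l (𝓝 (φ (S x))) := by
  have hΨ_all : ∀ φ ∈ Ψ, ∀ x, Tendsto (fun i => φ (U i x)) l (𝓝 (φ (S x))) := fun φ hφ =>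
    hD.induction (fun x hx => h x hx φ hφ) <|
      isClosed_setOf_tendsto_of_lipschitzWith (K := ‖φ‖₊ * C)
        (fun i => (φ.comp (U i)).lipschitz.weaken <|
          (φ.opNNNorm_comp_le (U i)).trans (by gcongr; exact hU i))
        (φ.comp S).continuous
  refine hΨ.induction (fun φ hφ => hΨ_all φ hφ x) ?_ φ
  exact isClosed_setOf_tendsto_of_lipschitzWith (K := C * ‖x‖₊)
    (fun i => (ContinuousLinearMap.lipschitz_apply (U i x)).weaken (((U i).le_opNNNorm x).trans
      (by gcongr; exact hU i)))
    (continuous_eval_const (S x))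

theorem ContinuousLinearMap.nnnorm_pow_le_one {T : E →L[𝕜] E} (hT : ‖T‖ ≤ 1) (n : ℕ) :
    ‖T ^ n‖₊ ≤ 1 := by
  rcases n.eq_zero_or_pos with rfl | hn
  · exact norm_id_le
  · exact (norm_pow_le' T hn).trans (pow_le_one₀ (norm_nonneg _) hT)

end NormedSpace

theorem exists_strictMono_forall_tendsto_of_frequently {α : Type*} [PseudoMetricSpace α]
    {a : ℕ → ℕ → α} {b : ℕ → α}
    (h : ∀ ε > 0, ∀ k, ∃ᶠ m in atTop, ∀ j < k, dist (a j m) (b j) < ε) :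
    ∃ g : ℕ → ℕ, StrictMono g ∧ ∀ j, Tendsto (fun k => a j (g k)) atTop (𝓝 (b j)) := by
  obtain ⟨g, hg, hg_dist⟩ :=
    extraction_forall_of_frequently fun k => h (1 / ((k : ℝ) + 1)) Nat.one_div_pos_of_nat k
  refine ⟨g, hg, fun j => tendsto_iff_dist_tendsto_zero.2 ?_⟩
  refine squeeze_zero' (Eventually.of_forall fun _ => dist_nonneg) ?_
    tendsto_one_div_add_atTop_nhds_zero_nat
  filter_upwards [eventually_gt_atTop j] with k hk using (hg_dist k j hk).le

section WeakLimit

variable {X : Type*} [NormedAddCommGroup X] [NormedSpace ℂ X] {T S : X →L[ℂ] X}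

theorem IsWeakLimitOfPowers.pow_mul (h : IsWeakLimitOfPowers T S) (m : ℕ) :
    IsWeakLimitOfPowers T (T ^ m * S) := by
  obtain ⟨n, hn, hconv⟩ := h
  refine ⟨fun k => m + n k, fun a b hab => Nat.add_lt_add_left (hn hab) m, fun x φ => ?_⟩
  simpa [pow_add] using hconv x (φ.comp (T ^ m))

theorem IsWeakLimitOfPowers.frequently_norm_sub_lt (h : IsWeakLimitOfPowers T S) {ε : ℝ}
    (hε : 0 < ε) {r : ℕ} (x : Fin r → X) (φ : Fin r → X →L[ℂ] ℂ) :
    ∃ᶠ m in atTop, ∀ i, ‖φ i ((T ^ m) (x i)) - φ i (S (x i))‖ < ε := by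
  obtain ⟨n, hn, hconv⟩ := h
  have hev : ∀ᶠ k in atTop, ∀ i, ‖φ i ((T ^ n k) (x i)) - φ i (S (x i))‖ < ε :=
    eventually_all.2 fun i => by
      simpa only [dist_eq_norm] using Metric.tendsto_nhds.1 (hconv (x i) (φ i)) ε hε
  exact hn.tendsto_atTop.frequently hev.frequently

theorem IsWeakLimitOfPowers.memWOTClosure (h : IsWeakLimitOfPowers T S) :
    MemWOTClosure {U | ∃ n : ℕ, U = T ^ n} S := fun _ hε _ x φ =>
  let ⟨m, hm⟩ := (h.frequently_norm_sub_lt hε x φ).exists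
  ⟨T ^ m, ⟨m, rfl⟩, hm⟩

theorem MemWOTClosure.frequently_norm_sub_lt (hI : IsWeakLimitOfPowers T 1)
    (hS : MemWOTClosure {U | ∃ n : ℕ, U = T ^ n} S) {ε : ℝ} (hε : 0 < ε) {r : ℕ}
    (x : Fin r → X) (φ : Fin r → X →L[ℂ] ℂ) :
    ∃ᶠ m in atTop, ∀ i, ‖φ i ((T ^ m) (x i)) - φ i (S (x i))‖ < ε := by
  obtain ⟨_, ⟨m₀, rfl⟩, hm₀⟩ := hS (ε / 2) (half_pos hε) r x φ
  have hpow : IsWeakLimitOfPowers T (T ^ m₀) := by simpa using hI.pow_mul m₀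
  refine (hpow.frequently_norm_sub_lt (half_pos hε) x φ).mono fun m hm i => ?_
  calc ‖φ i ((T ^ m) (x i)) - φ i (S (x i))‖
      ≤ ‖φ i ((T ^ m) (x i)) - φ i ((T ^ m₀) (x i))‖
        + ‖φ i ((T ^ m₀) (x i)) - φ i (S (x i))‖ := norm_sub_le_norm_sub_add_norm_sub _ _ _
    _ < ε / 2 + ε / 2 := add_lt_add (hm i) (hm₀ i)
    _ = ε := add_halves ε

theorem isWeakLimitOfPowers_of_frequently_norm_sub_lt [SeparableSpace (X →L[ℂ] ℂ)]
    (hT : ‖T‖ ≤ 1)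
    (h : ∀ ε > (0 : ℝ), ∀ (r : ℕ) (x : Fin r → X) (φ : Fin r → X →L[ℂ] ℂ),
      ∃ᶠ m in atTop, ∀ i, ‖φ i ((T ^ m) (x i)) - φ i (S (x i))‖ < ε) :
    IsWeakLimitOfPowers T S := by
  have := separableSpace_of_separableSpace_strongDual ℂ X
  have : Nonempty (X →L[ℂ] ℂ) := ⟨0⟩
  let d := denseSeq X
  let ψ := denseSeq (X →L[ℂ] ℂ)
  obtain ⟨g, hg, hg_tendsto⟩ := exists_strictMono_forall_tendsto_of_frequently
    (a := fun j m => ψ j.unpair.2 ((T ^ m) (d j.unpair.1)))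
    (b := fun j => ψ j.unpair.2 (S (d j.unpair.1)))
    fun ε hε k => (h ε hε k (fun i => d (i : ℕ).unpair.1) (fun i => ψ (i : ℕ).unpair.2)).mono
      fun m hm j hj => by simpa only [dist_eq_norm] using hm ⟨j, hj⟩
  refine ⟨g, hg, tendsto_dual_apply_of_dense (fun k => T.nnnorm_pow_le_one hT (g k)) S
    (denseRange_denseSeq X) (denseRange_denseSeq _) ?_⟩
  rintro _ ⟨i, rfl⟩ _ ⟨j, rfl⟩
  simpa using hg_tendsto (Nat.pair i j)

end WeakLimit

/-- If some subsequence of powers of the contraction `T` converges to the identity in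
the weak operator topology, then the weak limit semigroup of `T` equals the weak
operator closure of `{T^n : n ≥ 0}`. -/
theorem stmt_9 {X : Type*} [NormedAddCommGroup X] [NormedSpace ℂ X]
    [TopologicalSpace.SeparableSpace (X →L[ℂ] ℂ)]
    (T : X →L[ℂ] X) (hT : ‖T‖ ≤ 1)
    (hI : IsWeakLimitOfPowers T 1) :
    {S : X →L[ℂ] X | IsWeakLimitOfPowers T S} =
      {S : X →L[ℂ] X | MemWOTClosure {U | ∃ n : ℕ, U = T ^ n} S} := by
  ext S
  exact ⟨IsWeakLimitOfPowers.memWOTClosure, fun hS =>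
    isWeakLimitOfPowers_of_frequently_norm_sub_lt hT fun _ hε _ x φ =>
      hS.frequently_norm_sub_lt hI hε x φ⟩
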